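/- arXiv:2103.06047 — 2 statements merged into one kernel-verified Lean document; each statement's English description precedes it below -/
import Mathlib

section
/- (Theorem 2, eventually case.) Let d ≥ 1, let L be a finite set, let g : Fin d → L assign each coordinate to a group, let c : Fin d → ℝ and r : L → ℝ with r l ≥ 0 for all l ∈ L. Let h : (Fin d → ℝ) → ℝ be concave on a convex set X containing the closed box B = {z | ∀ j, |z j − c j| ≤ r (g j)}, and suppose h ξ ≥ 0 for every ξ in the vertex set V = {ξ | ∀ j, ξ j = c j − r (g j) ∨ ξ j = c j + r (g j)}. Let y : ℝ → (Fin d → ℝ) be a signal, 0 ≤ a ≤ b, and t* ∈ [a,b]. If |y t* j − c j| < r (g j) for every j ∈ Fin d (i.e., every sub-team's local predicate function r l − ‖(y t* − c) restricted to the group-l coordinates‖_∞ is strictly positive at time t*), then there exists t ∈ [a,b] with h (y t) ≥ 0. -/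
/-- Theorem 2, eventually case: let the global predicate function `h` be
concave on a convex set `X` containing the closed box
`B = {z | ∀ j, |z j − c j| ≤ r (g j)}` and nonnegative on the vertex set `V`.
If at some `t* ∈ [a,b]` every sub-team's local hypercube predicate is strictly
positive (i.e. `|y t* j − c j| < r (g j)` for all `j`), then the global
eventually-formula holds: there exists `t ∈ [a,b]` with `h (y t) ≥ 0`. -/
theorem theorem2_eventually (d : ℕ) (hd : 1 ≤ d)
    (L : Type*) [Fintype L] (g : Fin d → L)
    (c : Fin d → ℝ) (r : L → ℝ) (hr : ∀ l, 0 ≤ r l)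
    (X : Set (Fin d → ℝ)) (h : (Fin d → ℝ) → ℝ)
    (hconc : ConcaveOn ℝ X h)
    (hBX : {z : Fin d → ℝ | ∀ j, |z j - c j| ≤ r (g j)} ⊆ X)
    (hvert : ∀ ξ ∈ {ξ : Fin d → ℝ | ∀ j, ξ j = c j - r (g j) ∨ ξ j = c j + r (g j)},
      0 ≤ h ξ)
    (y : ℝ → (Fin d → ℝ)) (a b : ℝ) (ha : 0 ≤ a) (hab : a ≤ b)
    (tstar : ℝ) (htstar : tstar ∈ Set.Icc a b)
    (hsig : ∀ j : Fin d, |y tstar j - c j| < r (g j)) :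
    ∃ t ∈ Set.Icc a b, 0 ≤ h (y t) := by
  refine ⟨tstar, htstar, ?_⟩
  set V : Set (Fin d → ℝ) :=
    {ξ : Fin d → ℝ | ∀ j, ξ j = c j - r (g j) ∨ ξ j = c j + r (g j)}
  have hVpi : V = Set.pi Set.univ
      (fun j => ({c j - r (g j), c j + r (g j)} : Set ℝ)) := by
    ext ξ; simp [V, Set.mem_pi]
  have hVX : V ⊆ X := by
    intro ξ hξ
    apply hBX
    intro j
    rcases hξ j with h1 | h1 <;> rw [h1] <;> simp [abs_le, hr (g j)]
  have hmem : y tstar ∈ convexHull ℝ V := by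
    rw [hVpi, ← Set.pi_univ_ite]
    apply mem_convexHull_pi
    intro j _
    have : convexHull ℝ ({c j - r (g j), c j + r (g j)} : Set ℝ)
        = Set.Icc (c j - r (g j)) (c j + r (g j)) := by
      rw [convexHull_pair, segment_eq_Icc (by linarith [hr (g j)])]
    rw [if_pos (Set.mem_univ j), this]
    have := (hsig j).le
    rw [abs_le] at this
    constructor <;> linarith [this.1, this.2]
  obtain ⟨ξ, hξ, hle⟩ := hconc.exists_le_of_mem_convexHull hVX hmem
  exact le_trans (hvert ξ hξ) hle
end

section
/- (Theorem 2, strict robustness version, always case.) Let d ≥ 1, let L be a finite set, let g : Fin d → L assign each coordinate to a group, let c : Fin d → ℝ and r : L → ℝ with r l ≥ 0 for all l ∈ L. Let h : (Fin d → ℝ) → ℝ be concave on a convex set X containing the closed box B = {z | ∀ j, |z j − c j| ≤ r (g j)}, and suppose h ξ > 0 for every ξ in the vertex set V = {ξ | ∀ j, ξ j = c j − r (g j) ∨ ξ j = c j + r (g j)}. Let y : ℝ → (Fin d → ℝ) be a signal and 0 ≤ a ≤ b. If for every t ∈ [a,b] and every j ∈ Fin d one has |y t j − c j| ≤ r (g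 j), then h (y t) > 0 for every t ∈ [a,b]; i.e., strict feasibility of the vertex constraints yields strictly positive robustness of the global always-formula along any signal that satisfies all the local hypercube tasks. -/
/-- Theorem 2, strict robustness version, always case: if the global predicate
function `h`, concave on a convex set `X` containing the closed box
`B = {z | ∀ j, |z j − c j| ≤ r (g j)}`, is strictly positive on the vertex set
`V`, then any signal satisfying all the local hypercube tasks
(`|y t j − c j| ≤ r (g j)` for all `t ∈ [a,b]` and all `j`) yields strictly
positive robustness of the global always-formula: `h (y t) > 0` on `[a,b]`. -/
theorem theorem2_always_strict (d : ℕ) (hd : 1 ≤ d)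
    (L : Type*) [Fintype L] (g : Fin d → L)
    (c : Fin d → ℝ) (r : L → ℝ) (hr : ∀ l, 0 ≤ r l)
    (X : Set (Fin d → ℝ)) (h : (Fin d → ℝ) → ℝ)
    (hconc : ConcaveOn ℝ X h)
    (hBX : {z : Fin d → ℝ | ∀ j, |z j - c j| ≤ r (g j)} ⊆ X)
    (hvert : ∀ ξ ∈ {ξ : Fin d → ℝ | ∀ j, ξ j = c j - r (g j) ∨ ξ j = c j + r (g j)},
      0 < h ξ)
    (y : ℝ → (Fin d → ℝ)) (a b : ℝ) (ha : 0 ≤ a) (hab : a ≤ b)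
    (hsig : ∀ t ∈ Set.Icc a b, ∀ j : Fin d, |y t j - c j| ≤ r (g j)) :
    ∀ t ∈ Set.Icc a b, 0 < h (y t) := by
  intro t ht
  set V : Set (Fin d → ℝ) :=
    {ξ : Fin d → ℝ | ∀ j, ξ j = c j - r (g j) ∨ ξ j = c j + r (g j)} with hV
  have hVpi : V = Set.pi Set.univ
      (fun j => ({c j - r (g j), c j + r (g j)} : Set ℝ)) := by
    ext ξ; simp [hV, Set.mem_pi]
  have hVX : V ⊆ X := by
    intro ξ hξ
    apply hBX
    intro j
    rcases hξ j with hj | hj <;> rw [hj] <;>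
      · rw [abs_le]; constructor <;> nlinarith [hr (g j)]
  have hmem : y t ∈ convexHull ℝ V := by
    rw [hVpi]
    apply mem_convexHull_pi
    intro j _
    rw [convexHull_pair, segment_eq_Icc (by nlinarith [hr (g j)])]
    have := hsig t ht j
    rw [abs_le] at this
    constructor <;> linarith [this.1, this.2]
  obtain ⟨ξ, hξV, hle⟩ := hconc.exists_le_of_mem_convexHull hVX hmem
  exact lt_of_lt_of_le (hvert ξ hξV) hle
end
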